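/- Let f ∈ ℝ[X_1,...,X_n] be non-constant of degree 2d with f_{2d,i} > 0 for all i and |α| < 2d for every α ∈ Δ. Let t = |Δ|. Then f − r_dmt is a sum of squares, where r_dmt = f_0 − Σ_{α∈Δ}(2d−|α|)·[(f_α/(2d))^{2d}·t^{|α|}·α^α·Π_i f_{2d,i}^{−α_i}]^{1/(2d−|α|)}. -/

import Mathlib

open Finset MvPolynomial

/-!
Each `α ∈ Δ` receives the share `f_{2d,i} / t` of every diagonal coefficient, and then
`θ_α + Σᵢ (f_{2d,i} / t) Xᵢ^{2d} + f_α X^α` is a sum of squares, `θ_α` being the `α`-term of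
`f_0 - r_dmt`. This is Hurwitz's theorem (`Σ νᵢ pᵢ^{2d} - 2d ∏ pᵢ^{νᵢ}` is a sum of squares when
`Σ νᵢ = 2d`) applied to `p₀ = c`, `pᵢ = μᵢ Xᵢ` with weights `2d - |α|` and `αᵢ`, for real `c`, `μᵢ`
fitted to the coefficients; the constant term it produces is exactly `θ_α`. The remaining
non-constant monomials of `f` have even exponents and nonnegative coefficients, so are squares.

Hurwitz's theorem reduces, by splitting the `2d` weights into two halves, to
`Σ xᵢ^{2m} - m ∏ xᵢ²` (`m` terms) being a sum of squares, which follows by induction on `m` from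
a symmetrisation identity.
-/

section Hurwitz

variable {R ι : Type*} [CommRing R]

theorem IsSumSq.of_natCast_mul [Algebra ℚ R] {n : ℕ} (hn : n ≠ 0) {x : R}
    (h : IsSumSq ((n : R) * x)) : IsSumSq x := by
  set q := algebraMap ℚ R (n : ℚ)⁻¹
  have hq : (n : R) * q = 1 := by
    rw [← map_natCast (algebraMap ℚ R), ← map_mul, mul_inv_cancel₀ (by exact_mod_cast hn), map_one]
  have hx : x = (n : R) * (q * q) * ((n : R) * x) := by
    linear_combination (-x * (1 + n * q)) * hq
  rw [hx]
  exact ((IsSumSq.natCast n).mul (IsSumSq.mul_self q)).mul h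

theorem isSumSq_sq_sub_mul_pow_sub_pow (x y : R) (j : ℕ) :
    IsSumSq ((x ^ 2 - y ^ 2) * ((x ^ 2) ^ j - (y ^ 2) ^ j)) := by
  rw [← geom_sum₂_mul (x ^ 2) (y ^ 2) j, mul_comm, Finset.sum_mul, Finset.sum_mul]
  convert IsSumSq.sum_sq (range j) fun i => x ^ i * y ^ (j - 1 - i) * (x ^ 2 - y ^ 2) using 2
  ring

theorem hurwitz_identity [DecidableEq ι] {s : Finset ι} {k : ℕ} (hs : #s = k + 2) (u : ι → R) :
    ∑ i ∈ s, ∑ j ∈ s, (u i - u j) * (u i ^ (k + 1) - u j ^ (k + 1)) +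
      2 * ∑ j ∈ s, u j * (∑ i ∈ s.erase j, u i ^ (k + 1) - (k + 1 : ℕ) * ∏ i ∈ s.erase j, u i) =
    2 * (k + 1 : ℕ) * (∑ i ∈ s, u i ^ (k + 2) - (k + 2 : ℕ) * ∏ i ∈ s, u i) := by
  have hS1 : ∑ i ∈ s, ∑ j ∈ s, (u i - u j) * (u i ^ (k + 1) - u j ^ (k + 1)) =
      2 * (k + 2 : ℕ) * ∑ i ∈ s, u i ^ (k + 2) - 2 * (∑ i ∈ s, u i) * ∑ i ∈ s, u i ^ (k + 1) := by
    simp only [sub_mul, mul_sub, Finset.sum_sub_distrib, Finset.sum_const, hs, nsmul_eq_mul,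
      ← Finset.mul_sum, ← Finset.sum_mul, ← pow_succ']
    ring
  have hS2 : ∀ j ∈ s, u j * (∑ i ∈ s.erase j, u i ^ (k + 1) - (k + 1 : ℕ) * ∏ i ∈ s.erase j, u i) =
      u j * ∑ i ∈ s, u i ^ (k + 1) - u j ^ (k + 2) - (k + 1 : ℕ) * ∏ i ∈ s, u i := by
    intro j hj
    rw [Finset.sum_erase_eq_sub hj, ← Finset.mul_prod_erase s u hj]
    ring
  rw [hS1, Finset.sum_congr rfl hS2]
  simp only [Finset.sum_sub_distrib, ← Finset.sum_mul, Finset.sum_const, hs, nsmul_eq_mul]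
  push_cast
  ring

variable [Algebra ℚ R]

theorem isSumSq_sum_sq_pow_card_sub_card_mul_prod_sq (s : Finset ι) (x : ι → R) :
    IsSumSq (∑ i ∈ s, (x i ^ 2) ^ #s - #s * ∏ i ∈ s, x i ^ 2) := by
  classical
  induction s using Finset.strongInduction with
  | H s ih =>
    obtain hs | hs | ⟨k, hs⟩ : #s = 0 ∨ #s = 1 ∨ ∃ k, #s = k + 2 := by
      rcases #s with _ | _ | k <;> simp
    · simp [Finset.card_eq_zero.mp hs, IsSumSq.zero]
    · obtain ⟨a, rfl⟩ := Finset.card_eq_one.mp hs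
      simp [IsSumSq.zero]
    · refine IsSumSq.of_natCast_mul (n := 2 * (k + 1)) (by omega) ?_
      rw [hs, Nat.cast_mul, Nat.cast_two, ← hurwitz_identity hs]
      refine (IsSumSq.sum fun i _ => IsSumSq.sum fun j _ =>
        isSumSq_sq_sub_mul_pow_sub_pow (x i) (x j) (k + 1)).add
          ((IsSumSq.natCast 2).mul (IsSumSq.sum fun j hj => ?_))
      have hcard : #(s.erase j) = k + 1 := by rw [Finset.card_erase_of_mem hj, hs]; rfl
      have hj' := ih (s.erase j) (Finset.erase_ssubset hj)
      rw [hcard] at hj'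
      exact (IsSquare.sq (x j)).isSumSq.mul hj'

theorem isSumSq_sum_pow_sub_mul_prod {T : Finset ι} {d : ℕ} (hT : #T = 2 * d) (p : ι → R) :
    IsSumSq (∑ i ∈ T, p i ^ (2 * d) - (2 * d : ℕ) * ∏ i ∈ T, p i) := by
  classical
  obtain ⟨T₁, hT₁, hcard₁⟩ := Finset.exists_subset_card_eq (s := T) (n := d) (by omega)
  have hcard₂ : #(T \ T₁) = d := by rw [Finset.card_sdiff_of_subset hT₁]; omega
  have h₁ := isSumSq_sum_sq_pow_card_sub_card_mul_prod_sq T₁ p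
  have h₂ := isSumSq_sum_sq_pow_card_sub_card_mul_prod_sq (T \ T₁) p
  rw [hcard₁] at h₁
  rw [hcard₂] at h₂
  have hsq := (IsSumSq.natCast (R := R) d).mul (IsSquare.sq
    (∏ i ∈ T₁, p i - ∏ i ∈ T \ T₁, p i)).isSumSq
  have hsplit : ∑ i ∈ T, p i ^ (2 * d) - (2 * d : ℕ) * ∏ i ∈ T, p i =
      (∑ i ∈ T₁, (p i ^ 2) ^ d - d * ∏ i ∈ T₁, p i ^ 2) +
        (∑ i ∈ T \ T₁, (p i ^ 2) ^ d - d * ∏ i ∈ T \ T₁, p i ^ 2) +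
        d * (∏ i ∈ T₁, p i - ∏ i ∈ T \ T₁, p i) ^ 2 := by
    rw [← Finset.sum_sdiff hT₁, ← Finset.prod_sdiff hT₁]
    simp only [← pow_mul, Finset.prod_pow]
    push_cast
    ring
  rw [hsplit]
  exact (h₁.add h₂).add hsq

theorem isSumSq_sum_mul_pow_sub_mul_prod_pow (s : Finset ι) (ν : ι → ℕ) {d : ℕ}
    (hν : ∑ i ∈ s, ν i = 2 * d) (p : ι → R) :
    IsSumSq (∑ i ∈ s, (ν i : R) * p i ^ (2 * d) - (2 * d : ℕ) * ∏ i ∈ s, p i ^ ν i) := by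
  have hT : #(s.sigma fun i => range (ν i)) = 2 * d := by simp [hν]
  convert isSumSq_sum_pow_sub_mul_prod hT (fun x => p x.1) using 3
  · simp [Finset.sum_sigma]
  · simp [Finset.prod_sigma]

end Hurwitz

section Polynomial

variable {σ : Type*}

theorem Finsupp.even_of_forall_even {β : σ →₀ ℕ} (h : ∀ i, Even (β i)) : Even β :=
  ⟨β.mapRange (· / 2) (Nat.zero_div 2), Finsupp.ext fun i => by
    obtain ⟨m, hm⟩ := h i
    simp only [Finsupp.coe_add, Pi.add_apply, Finsupp.mapRange_apply, hm]
    omega⟩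

theorem isSumSq_monomial {β : σ →₀ ℕ} (hβ : Even β) {c : ℝ} (hc : 0 ≤ c) :
    IsSumSq (monomial β c) := by
  obtain ⟨γ, rfl⟩ := hβ
  rw [← Real.mul_self_sqrt hc, ← monomial_mul]
  exact IsSumSq.mul_self _

theorem isSumSq_sub_sum_monomial_coeff (p : MvPolynomial σ ℝ) (S : Finset (σ →₀ ℕ))
    (h : ∀ β ∈ p.support, β ∉ S → 0 ≤ p.coeff β ∧ Even β) :
    IsSumSq (p - ∑ β ∈ S, monomial β (p.coeff β)) := by
  classical
  set q := p - ∑ β ∈ S, monomial β (p.coeff β)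
  have hq : ∀ β, q.coeff β = if β ∈ S then 0 else p.coeff β := by
    intro β
    simp only [q, coeff_sub, coeff_sum, coeff_monomial, Finset.sum_ite_eq']
    split_ifs <;> simp
  rw [← q.support_sum_monomial_coeff]
  refine IsSumSq.sum fun β hβ => ?_
  have hβ' := mem_support_iff.mp hβ
  rw [hq] at hβ' ⊢
  split_ifs at hβ' ⊢ with hS
  · exact absurd rfl hβ'
  · obtain ⟨h0, he⟩ := h β (mem_support_iff.mpr hβ') hS
    exact isSumSq_monomial he h0

theorem isSumSq_C_mul_X_pow_two_mul {b : ℝ} (hb : 0 ≤ b) (i : σ) (d : ℕ) :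
    IsSumSq (C b * X i ^ (2 * d) : MvPolynomial σ ℝ) := by
  have hsq : (C b * X i ^ (2 * d) : MvPolynomial σ ℝ) =
      (C (Real.sqrt b) * X i ^ d) * (C (Real.sqrt b) * X i ^ d) := by
    rw [mul_mul_mul_comm, ← map_mul, Real.mul_self_sqrt hb, ← pow_add, two_mul]
  rw [hsq]
  exact IsSumSq.mul_self _

variable [Fintype σ]

theorem isSumSq_C_add_sum_C_mul_X_pow_sub_monomial {K : Type*} [CommRing K] [Algebra ℚ K]
    {s d : ℕ} {α : σ →₀ ℕ} (h : s + ∑ i, α i = 2 * d) (c : K) (μ : σ → K) :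
    IsSumSq (C (s * c ^ (2 * d)) + ∑ i, C (α i * μ i ^ (2 * d)) * X i ^ (2 * d) -
      monomial α ((2 * d : ℕ) * c ^ s * ∏ i, μ i ^ α i) : MvPolynomial σ K) := by
  have := isSumSq_sum_mul_pow_sub_mul_prod_pow (R := MvPolynomial σ K) univ
    (fun o : Option σ => o.elim s (α ·)) (d := d) (by simpa [Fintype.sum_option] using h)
    (fun o : Option σ => o.elim (C c) fun i => C (μ i) * X i)
  simp only [Fintype.sum_option, Fintype.prod_option, Option.elim] at this
  have hmono : monomial α ((2 * d : ℕ) * c ^ s * ∏ i, μ i ^ α i) =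
      ((2 * d : ℕ) : MvPolynomial σ K) * (C c ^ s * ∏ i, (C (μ i) * X i) ^ α i) := by
    rw [monomial_eq, Finsupp.prod_fintype _ _ fun _ => pow_zero _]
    simp only [map_mul, map_prod, map_pow, map_natCast, mul_pow, Finset.prod_mul_distrib]
    ring
  rw [hmono]
  simpa only [map_mul, map_pow, map_natCast, mul_pow, mul_assoc] using this

end Polynomial

section AmgmCertificate

variable {σ : Type*} [Fintype σ]

noncomputable def amgmConst (d : ℕ) (α : σ →₀ ℕ) (lam : ℝ) (a : σ → ℝ) : ℝ :=
  ((2 * d - ∑ i, α i : ℕ) : ℝ) *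
    ((lam / ((2 * d : ℕ) : ℝ)) ^ (2 * d) * (∏ i, ((α i : ℕ) : ℝ) ^ α i) *
      (∏ i, a i ^ α i)⁻¹) ^ (1 / ((2 * d - ∑ i, α i : ℕ) : ℝ))

theorem exists_prod_pow_mul_abs_eq_neg {α : σ →₀ ℕ} {lam : ℝ}
    (h : lam ≤ 0 ∨ ∃ i, Odd (α i)) :
    ∃ ε : σ → ℝ, (∀ i, ε i ^ 2 = 1) ∧ (∏ i, ε i ^ α i) * |lam| = -lam := by
  classical
  rcases le_or_gt lam 0 with hlam | hlam
  · exact ⟨1, by simp, by simp [abs_of_nonpos hlam]⟩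
  · obtain ⟨i₀, hodd⟩ := h.resolve_left hlam.not_ge
    refine ⟨fun j => if j = i₀ then -1 else 1, fun j => by dsimp only; split_ifs <;> norm_num, ?_⟩
    simp [ite_pow, Finset.prod_ite_eq', hodd.neg_one_pow, abs_of_pos hlam]

theorem exists_pow_eq_div_natCast {d : ℕ} (hd : d ≠ 0) (α : σ →₀ ℕ) {a : σ → ℝ}
    (ha : ∀ i, 0 < a i) : ∃ ρ : σ → ℝ, (∀ i, ρ i ^ d = a i / α i) ∧ 0 < ∏ i, ρ i ^ α i := by
  refine ⟨fun i => (a i / α i) ^ (d : ℝ)⁻¹, fun i => Real.rpow_inv_natCast_pow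
    (div_nonneg (ha i).le (Nat.cast_nonneg _)) hd, Finset.prod_pos fun i _ => ?_⟩
  rcases eq_or_ne (α i) 0 with h | h
  · simp [h]
  · exact pow_pos (Real.rpow_pos_of_pos (div_pos (ha i) (by positivity)) _) _

/-- Parameters of the AM–GM certificate: `μᵢ = ±(aᵢ/αᵢ)^(1/2d)` and `cˢ = |λ| / (2d ∏ |μᵢ|^αᵢ)`
with `s = 2d - |α|`, the signs chosen so that the cross term `2d cˢ μ^α` equals `-λ`. -/
theorem exists_amgm_params {d : ℕ} {α : σ →₀ ℕ} (hα : ∑ i, α i < 2 * d) {lam : ℝ}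
    (hsgn : lam ≤ 0 ∨ ∃ i, Odd (α i)) {a : σ → ℝ} (ha : ∀ i, 0 < a i) :
    ∃ (c : ℝ) (μ : σ → ℝ), ((2 * d - ∑ i, α i : ℕ) : ℝ) * c ^ (2 * d) = amgmConst d α lam a ∧
      (∀ i, (α i : ℝ) * μ i ^ (2 * d) ≤ a i) ∧
      ((2 * d : ℕ) : ℝ) * c ^ (2 * d - ∑ i, α i) * ∏ i, μ i ^ α i = -lam := by
  obtain ⟨ε, hε, hεlam⟩ := exists_prod_pow_mul_abs_eq_neg hsgn
  obtain ⟨ρ, hρ, hP⟩ := exists_pow_eq_div_natCast (d := 2 * d) (by omega) α ha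
  set G := |lam| / ((2 * d : ℕ) * ∏ i, ρ i ^ α i)
  have hG : 0 ≤ G := div_nonneg (abs_nonneg _) (mul_nonneg (Nat.cast_nonneg _) hP.le)
  refine ⟨G ^ ((2 * d - ∑ i, α i : ℕ) : ℝ)⁻¹, fun i => ε i * ρ i, ?_, fun i => ?_, ?_⟩
  · have hP2d : (∏ i, ρ i ^ α i) ^ (2 * d) = (∏ i, a i ^ α i) / ∏ i, ((α i : ℕ) : ℝ) ^ α i := by
      rw [← Finset.prod_pow, ← Finset.prod_div_distrib]
      refine Finset.prod_congr rfl fun i _ => ?_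
      rw [← pow_mul, mul_comm, pow_mul, hρ, div_pow]
    rw [amgmConst, Real.rpow_pow_comm hG, one_div, div_pow, mul_pow, hP2d,
      (even_two_mul d).pow_abs]
    congr 2
    simp only [div_eq_mul_inv, mul_inv, inv_inv, mul_pow]
    ring
  · rw [mul_pow, pow_mul, hε, one_pow, one_mul, hρ]
    rcases eq_or_ne (α i) 0 with h | h
    · simp [h, (ha i).le]
    · rw [mul_div_cancel₀ _ (by exact_mod_cast h)]
  · have hGP : ((2 * d : ℕ) : ℝ) * G * ∏ i, ρ i ^ α i = |lam| := by
      have h2d : ((2 * d : ℕ) : ℝ) ≠ 0 := by exact_mod_cast (show 2 * d ≠ 0 by omega)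
      simp only [G]
      field_simp
    rw [Real.rpow_inv_natCast_pow hG (by omega), ← hεlam]
    simp only [mul_pow, Finset.prod_mul_distrib]
    linear_combination (∏ i, ε i ^ α i) * hGP

theorem isSumSq_C_amgmConst_add {d : ℕ} {α : σ →₀ ℕ} (hα : ∑ i, α i < 2 * d) {lam : ℝ}
    (hsgn : lam ≤ 0 ∨ ∃ i, Odd (α i)) {a : σ → ℝ} (ha : ∀ i, 0 < a i) :
    IsSumSq (C (amgmConst d α lam a) + ∑ i, C (a i) * X i ^ (2 * d) + monomial α lam) := by
  obtain ⟨c, μ, hc, hμ, hprod⟩ := exists_amgm_params hα hsgn ha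
  have hcert := isSumSq_C_add_sum_C_mul_X_pow_sub_monomial (s := 2 * d - ∑ i, α i)
    (d := d) (α := α) (by omega) c μ
  rw [hc, hprod] at hcert
  have hrest : IsSumSq (∑ i, C (a i - α i * μ i ^ (2 * d)) * X i ^ (2 * d) : MvPolynomial σ ℝ) :=
    IsSumSq.sum fun i _ => isSumSq_C_mul_X_pow_two_mul (sub_nonneg.2 (hμ i)) i d
  have hsplit : (C (amgmConst d α lam a) + ∑ i, C (a i) * X i ^ (2 * d) + monomial α lam :
      MvPolynomial σ ℝ) =
      (C (amgmConst d α lam a) + ∑ i, C (α i * μ i ^ (2 * d)) * X i ^ (2 * d) -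
        monomial α (-lam)) + ∑ i, C (a i - α i * μ i ^ (2 * d)) * X i ^ (2 * d) := by
    simp only [map_neg, map_sub, sub_mul, Finset.sum_sub_distrib]
    ring
  rw [hsplit]
  exact hcert.add hrest

theorem amgmConst_div_const (d : ℕ) (α : σ →₀ ℕ) (lam t : ℝ) (F : σ → ℝ) :
    amgmConst d α lam (fun i => F i / t) =
      ((2 * d - ∑ i, α i : ℕ) : ℝ) *
        ((lam / ((2 * d : ℕ) : ℝ)) ^ (2 * d) * t ^ (∑ i, α i) * (∏ i, ((α i : ℕ) : ℝ) ^ α i) *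
          (∏ i, F i ^ α i)⁻¹) ^ (1 / ((2 * d - ∑ i, α i : ℕ) : ℝ)) := by
  have hprod : ∏ i, (F i / t) ^ α i = (∏ i, F i ^ α i) / t ^ ∑ i, α i := by
    rw [← Finset.prod_pow_eq_pow_sum, ← Finset.prod_div_distrib]
    exact Finset.prod_congr rfl fun i _ => div_pow _ _ _
  rw [amgmConst, hprod, inv_div, div_eq_mul_inv]
  ring_nf

end AmgmCertificate

section Decomposition

variable {σ : Type*} [Fintype σ]

theorem coeff_nonneg_and_even_of_notMem {f : MvPolynomial σ ℝ} {d : ℕ} {Δ : Finset (σ →₀ ℕ)}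
    (hΔ : ∀ α ∈ f.support, α ≠ 0 → (¬ ∃ i, α = Finsupp.single i (2 * d)) →
      (f.coeff α < 0 ∨ ∃ i, Odd (α i)) → α ∈ Δ)
    (hpos : ∀ i, 0 < f.coeff (Finsupp.single i (2 * d)))
    {β : σ →₀ ℕ} (hβ : β ∈ f.support) (h0 : β ≠ 0) (hβΔ : β ∉ Δ) :
    0 ≤ f.coeff β ∧ Even β := by
  by_cases hsingle : ∃ i, β = Finsupp.single i (2 * d)
  · obtain ⟨i, rfl⟩ := hsingle
    exact ⟨(hpos i).le, Finsupp.single i d, by rw [← Finsupp.single_add, two_mul]⟩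
  · have hsq : ¬ (f.coeff β < 0 ∨ ∃ i, Odd (β i)) := fun h => hβΔ (hΔ β hβ h0 hsingle h)
    simp only [not_or, not_lt, not_exists, Nat.not_odd_iff_even] at hsq
    exact ⟨hsq.1, Finsupp.even_of_forall_even hsq.2⟩

theorem sum_monomial_coeff_insert_zero_union_image_single {d : ℕ} (hd : d ≠ 0)
    (f : MvPolynomial σ ℝ) {Δ : Finset (σ →₀ ℕ)} (h0 : 0 ∉ Δ)
    (hsingle : ∀ α ∈ Δ, ¬ ∃ i, α = Finsupp.single i (2 * d)) [DecidableEq σ] :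
    ∑ β ∈ insert 0 (Δ ∪ Finset.univ.image fun i => Finsupp.single i (2 * d)),
        monomial β (f.coeff β) =
      C (f.coeff 0) + ∑ α ∈ Δ, monomial α (f.coeff α) +
        ∑ i, C (f.coeff (Finsupp.single i (2 * d))) * X i ^ (2 * d) := by
  have hinj : Function.Injective fun i : σ => Finsupp.single i (2 * d) :=
    Finsupp.single_left_injective (by omega)
  have hdisj : Disjoint Δ (Finset.univ.image fun i => Finsupp.single i (2 * d)) :=
    Finset.disjoint_left.mpr fun α hα hα' => hsingle α hα (by simpa [eq_comm] using hα')
  have hnot0 : (0 : σ →₀ ℕ) ∉ Δ ∪ Finset.univ.image fun i => Finsupp.single i (2 * d) := by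
    simp only [Finset.mem_union, Finset.mem_image, Finset.mem_univ, true_and, not_or]
    exact ⟨h0, fun ⟨i, hi⟩ => by have := Finsupp.single_eq_zero.mp hi; omega⟩
  rw [Finset.sum_insert hnot0, Finset.sum_union hdisj, Finset.sum_image fun i _ j _ h => hinj h,
    C_apply, add_assoc]
  simp only [X_pow_eq_monomial, C_mul_monomial, mul_one]

theorem isSumSq_sub_C_sub_sum_amgmConst {f : MvPolynomial σ ℝ} {d : ℕ} {Δ : Finset (σ →₀ ℕ)}
    (hΔne : Δ.Nonempty)
    (hΔ : ∀ α ∈ Δ, α ≠ 0 ∧ (¬ ∃ i, α = Finsupp.single i (2 * d)) ∧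
      (f.coeff α < 0 ∨ ∃ i, Odd (α i)))
    (hΔdeg : ∀ α ∈ Δ, ∑ i, α i < 2 * d)
    (hpos : ∀ i, 0 < f.coeff (Finsupp.single i (2 * d)))
    (hrest : ∀ β ∈ f.support, β ≠ 0 → β ∉ Δ → 0 ≤ f.coeff β ∧ Even β) :
    IsSumSq (f - C (f.coeff 0 - ∑ α ∈ Δ,
      amgmConst d α (f.coeff α) fun i => f.coeff (Finsupp.single i (2 * d)) / #Δ)) := by
  classical
  have ht : (0 : ℝ) < #Δ := by exact_mod_cast hΔne.card_pos
  obtain ⟨α₀, hα₀⟩ := hΔne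
  have hd : d ≠ 0 := by have := hΔdeg α₀ hα₀; omega
  set F : σ → ℝ := fun i => f.coeff (Finsupp.single i (2 * d))
  have hterm : ∀ α ∈ Δ, IsSumSq (C (amgmConst d α (f.coeff α) fun i => F i / #Δ) +
      ∑ i, C (F i / #Δ) * X i ^ (2 * d) + monomial α (f.coeff α)) := fun α hα =>
    isSumSq_C_amgmConst_add (hΔdeg α hα) ((hΔ α hα).2.2.imp_left le_of_lt)
      fun i => div_pos (hpos i) ht
  have hrem := isSumSq_sub_sum_monomial_coeff f
    (insert 0 (Δ ∪ Finset.univ.image fun i => Finsupp.single i (2 * d))) fun β hβ hS =>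
      hrest β hβ (by simp_all) (by simp_all)
  rw [sum_monomial_coeff_insert_zero_union_image_single hd f (fun h => (hΔ 0 h).1 rfl)
    fun α hα => (hΔ α hα).2.1] at hrem
  have hsingles : ∑ _α ∈ Δ, ∑ i, C (F i / #Δ) * X i ^ (2 * d) =
      ∑ i, (C (F i) * X i ^ (2 * d) : MvPolynomial σ ℝ) := by
    rw [Finset.sum_const, Finset.smul_sum]
    refine Finset.sum_congr rfl fun i _ => ?_
    rw [nsmul_eq_mul, ← mul_assoc, ← map_natCast C, ← map_mul, mul_div_cancel₀ _ ht.ne']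
  refine (congrArg IsSumSq ?_).mp ((IsSumSq.sum hterm).add hrem)
  simp only [map_sub, map_sum, Finset.sum_add_distrib, hsingles]
  ring

end Decomposition

theorem rdmt_lower_bound_general {n d : ℕ} (f : MvPolynomial (Fin n) ℝ)
    (Δ : Finset (Fin n →₀ ℕ))
    (hΔ : ∀ α, α ∈ Δ ↔ α ∈ f.support ∧ α ≠ 0 ∧
      (¬ ∃ i, α = Finsupp.single i (2 * d)) ∧
      (f.coeff α < 0 ∨ ∃ i, Odd (α i)))
    (hpos : ∀ i, 0 < f.coeff (Finsupp.single i (2 * d)))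
    (hΔdeg : ∀ α ∈ Δ, ∑ i, α i < 2 * d) :
    IsSumSq (f - C (f.coeff 0 -
      ∑ α ∈ Δ, ((2 * d - ∑ i, α i : ℕ) : ℝ) *
        ((f.coeff α / ((2 * d : ℕ) : ℝ)) ^ (2 * d) *
          ((Δ.card : ℝ) ^ (∑ i, α i)) *
          (∏ i, ((α i : ℕ) : ℝ) ^ (α i)) *
          (∏ i, (f.coeff (Finsupp.single i (2 * d))) ^ (α i))⁻¹) ^
            (1 / ((2 * d - ∑ i, α i : ℕ) : ℝ)))) := by
  classical
  have hrest : ∀ β ∈ f.support, β ≠ 0 → β ∉ Δ → 0 ≤ f.coeff β ∧ Even β :=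
    fun β => coeff_nonneg_and_even_of_notMem (fun α h₁ h₂ h₃ h₄ => (hΔ α).2 ⟨h₁, h₂, h₃, h₄⟩) hpos
  rcases Δ.eq_empty_or_nonempty with rfl | hΔne
  · have h := isSumSq_sub_sum_monomial_coeff f {0} fun β hβ h0 =>
      hrest β hβ (Finset.notMem_singleton.mp h0) (Finset.notMem_empty β)
    rw [Finset.sum_singleton, ← C_apply] at h
    rwa [Finset.sum_empty, sub_zero]
  simp only [← amgmConst_div_const]
  exact isSumSq_sub_C_sub_sum_amgmConst hΔne (fun α hα => ((hΔ α).1 hα).2) hΔdeg hpos hrest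

/-- Explicit lower bound `r_dmt`: let `f` be non-constant of degree `2d` with
`f_{2d,i} > 0` for all `i` and `|α| < 2d` for all `α ∈ Δ`, and let `t = |Δ|`.
Then `f − r_dmt` is a sum of squares, where
`r_dmt = f_0 − Σ_{α∈Δ}(2d−|α|)·[(f_α/2d)^{2d}·t^{|α|}·α^α·Π_i f_{2d,i}^{−α_i}]^{1/(2d−|α|)}`. -/
theorem rdmt_lower_bound {n d : ℕ} (hd : 1 ≤ d) (f : MvPolynomial (Fin n) ℝ)
    (hdeg : f.totalDegree = 2 * d) (Δ : Finset (Fin n →₀ ℕ))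
    (hΔ : ∀ α, α ∈ Δ ↔ α ∈ f.support ∧ α ≠ 0 ∧
      (¬ ∃ i, α = Finsupp.single i (2 * d)) ∧
      (f.coeff α < 0 ∨ ∃ i, Odd (α i)))
    (hpos : ∀ i, 0 < f.coeff (Finsupp.single i (2 * d)))
    (hΔdeg : ∀ α ∈ Δ, ∑ i, α i < 2 * d) :
    IsSumSq (f - C (f.coeff 0 -
      ∑ α ∈ Δ, ((2 * d - ∑ i, α i : ℕ) : ℝ) *
        ((f.coeff α / ((2 * d : ℕ) : ℝ)) ^ (2 * d) *
          ((Δ.card : ℝ) ^ (∑ i, α i)) *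
          (∏ i, ((α i : ℕ) : ℝ) ^ (α i)) *
          (∏ i, (f.coeff (Finsupp.single i (2 * d))) ^ (α i))⁻¹) ^
            (1 / ((2 * d - ∑ i, α i : ℕ) : ℝ)))) :=
  rdmt_lower_bound_general f Δ hΔ hpos hΔdeg
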